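/- Let d = 4 and π be the permutation pair with π₁∘π₀⁻¹(i) = 5−i for i = 1,2,3,4, and suppose τ ∈ Θ^𝒜(π) satisfies τ_{π₀⁻¹(2)} = −τ_{π₀⁻¹(3)} > 0. Then along the entire backward Rauzy-Veech induction orbit of (π,λ,τ), neither π₀⁻¹(2) nor π₀⁻¹(3) is ever a backward winner; in particular after three backward steps the permutation returns to π. -/

import Mathlib

/-!
A backward step adds the loser's `τ` to the total `∑ τ`, whose sign decides the next backward
winner, and leaves every other `τ` unchanged. If `∑ τ < 0` the winner is `π₀⁻¹(4)`, which sits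
first in the bottom row, so the steps only rotate the bottom positions `2, 3, 4`: the losers are
`π₀⁻¹(3)`, `π₀⁻¹(2)`, `π₀⁻¹(1)`, the total changes first by `τ_{π₀⁻¹(3)} < 0` and then by
`τ_{π₀⁻¹(2)} = -τ_{π₀⁻¹(3)}`, so the winner stays `π₀⁻¹(4)` for three steps, after which `π`,
`τ_{π₀⁻¹(2)}` and `τ_{π₀⁻¹(3)}` are as at the start. The case `∑ τ ≥ 0` is the mirror image,
with winner `π₁⁻¹(4) = π₀⁻¹(1)`, and induction over blocks of three steps concludes.
-/

open scoped BigOperators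
noncomputable section

namespace RV

variable {A : Type*} [Fintype A] [DecidableEq A] {m : ℕ}

/-- Irreducibility of a permutation pair (positions are 0-indexed in `Fin (m+1)`,
so `d = m+1` and the paper's levels `k = 1, …, d-1` correspond to `k = 0, …, m-1`). -/
def Irreducible (p0 p1 : A ≃ Fin (m+1)) : Prop :=
  ∀ k : ℕ, k < m → ¬ (∀ α : A, (p0 α : ℕ) ≤ k ↔ (p1 α : ℕ) ≤ k)

/-- The suspension cone `Θ^𝒜(π)`. -/
def InTheta (p0 p1 : A ≃ Fin (m+1)) (tau : A → ℝ) : Prop :=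
  ∀ k : ℕ, k < m →
    (0 < ∑ α, if (p0 α : ℕ) ≤ k then tau α else 0) ∧
    ((∑ α, if (p1 α : ℕ) ≤ k then tau α else 0) < 0)

/-- `π₀⁻¹(d)`. -/
def topSym (p0 : A ≃ Fin (m+1)) : A := p0.symm (Fin.last m)

/-- `π₁⁻¹(d)`. -/
def botSym (p1 : A ≃ Fin (m+1)) : A := p1.symm (Fin.last m)

/-- The (forward) winner of one step of Rauzy–Veech induction. -/
def fwWinner (p0 p1 : A ≃ Fin (m+1)) (lam : A → ℝ) : A :=
  if lam (botSym p1) < lam (topSym p0) then topSym p0 else botSym p1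

/-- The (forward) loser of one step of Rauzy–Veech induction. -/
def fwLoser (p0 p1 : A ≃ Fin (m+1)) (lam : A → ℝ) : A :=
  if lam (botSym p1) < lam (topSym p0) then botSym p1 else topSym p0

/-- The data `(π, λ, τ)` of a translation surface (polygonal representation). -/
structure Datum (A : Type*) [Fintype A] (m : ℕ) where
  p0 : A ≃ Fin (m+1)
  p1 : A ≃ Fin (m+1)
  lam : A → ℝ
  tau : A → ℝ

/-- The backward winner of `(π, λ, τ)`. -/
def bwWinner (D : Datum A m) : A :=
  if (∑ α, D.tau α) < 0 then topSym D.p0 else botSym D.p1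

/-- The backward loser of `(π, λ, τ)`. -/
def bwLoser (D : Datum A m) : A :=
  if (∑ α, D.tau α) < 0 then botSym D.p1 else topSym D.p0

/-- One step of the (forward) extended Rauzy–Veech induction: `E = R(D)`. -/
def Step (D E : Datum A m) : Prop :=
  (E.tau = Function.update D.tau (fwWinner D.p0 D.p1 D.lam)
      (D.tau (fwWinner D.p0 D.p1 D.lam) - D.tau (fwLoser D.p0 D.p1 D.lam))) ∧
  ((D.lam (botSym D.p1) < D.lam (topSym D.p0) ∧ E.p0 = D.p0 ∧
      (∀ α : A, (E.p1 α : ℕ) =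
        if (D.p1 α : ℕ) ≤ (D.p1 (topSym D.p0) : ℕ) then (D.p1 α : ℕ)
        else if α = botSym D.p1 then (D.p1 (topSym D.p0) : ℕ) + 1
        else (D.p1 α : ℕ) + 1) ∧
      E.lam = Function.update D.lam (topSym D.p0)
        (D.lam (topSym D.p0) - D.lam (botSym D.p1)))
   ∨
   (D.lam (topSym D.p0) < D.lam (botSym D.p1) ∧ E.p1 = D.p1 ∧
      (∀ α : A, (E.p0 α : ℕ) =
        if (D.p0 α : ℕ) ≤ (D.p0 (botSym D.p1) : ℕ) then (D.p0 α : ℕ)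
        else if α = topSym D.p0 then (D.p0 (botSym D.p1) : ℕ) + 1
        else (D.p0 α : ℕ) + 1) ∧
      E.lam = Function.update D.lam (botSym D.p1)
        (D.lam (botSym D.p1) - D.lam (topSym D.p0))))

/-- `(π, λ, τ) ∈ S₀^𝒜 × Λ^𝒜 × Θ^𝒜`. -/
def Valid (D : Datum A m) : Prop :=
  (∀ α, 0 < D.lam α) ∧ InTheta D.p0 D.p1 D.tau ∧ Irreducible D.p0 D.p1

/-- An indefinitely defined backward Rauzy–Veech induction orbit:
`x n = R⁻ⁿ(x 0)`, i.e. each `x (n+1)` is mapped to `x n` by one forward step. -/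
def IsBackwardOrbit (x : ℕ → Datum A m) : Prop :=
  ∀ n, Step (x (n+1)) (x n) ∧ Valid (x n)

/-- Inverse, on positions, of the Rauzy move that inserts the last entry (position `M`) of a row
right after position `c`. -/
def undoInsertAfter (c M k : ℕ) : ℕ :=
  if k ≤ c then k else if k = c + 1 then M else k - 1

theorem val_eq_undoInsertAfter {ι : Type*} [DecidableEq ι] {q q' : ι ≃ Fin (m+1)} {t : ι}
    (h : ∀ α, (q' α : ℕ) = if (q α : ℕ) ≤ q t then (q α : ℕ)
      else if α = q.symm (Fin.last m) then (q t : ℕ) + 1 else (q α : ℕ) + 1) (α : ι) :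
    (q α : ℕ) = undoInsertAfter (q' t) m (q' α) := by
  have ht : (q' t : ℕ) = q t := by simp [h t]
  have hle : (q α : ℕ) ≤ m := Fin.is_le _
  rw [undoInsertAfter, ht, h α]
  by_cases hα : α = q.symm (Fin.last m)
  · have : (q α : ℕ) = m := by simp [hα]
    rw [if_pos hα]
    split_ifs <;> omega
  · have : (q α : ℕ) ≠ m := fun h' => hα (q.eq_symm_apply.mpr (Fin.ext h'))
    rw [if_neg hα]
    split_ifs <;> omega

theorem sum_update_sub (τ : A → ℝ) (w l : A) :
    ∑ α, Function.update τ w (τ w - τ l) α = ∑ α, τ α - τ l := by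
  rw [Finset.sum_update_of_mem (Finset.mem_univ w),
    Finset.sum_eq_add_sum_sdiff_singleton_of_mem (Finset.mem_univ w) τ]
  ring

theorem sum_ite_val_le_eq (q : A ≃ Fin (m+2)) (τ : A → ℝ) :
    (∑ α, if (q α : ℕ) ≤ m then τ α else 0) = ∑ α, τ α - τ (q.symm (Fin.last (m+1))) := by
  have hle : ∀ α, (q α : ℕ) ≤ m ↔ α ≠ q.symm (Fin.last (m+1)) := fun α => by
    rw [Ne, q.eq_symm_apply, Fin.ext_iff, Fin.val_last]
    have := (q α).is_lt
    omega
  simp_rw [hle]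
  rw [← Finset.sum_filter, Finset.filter_ne', Finset.sum_erase_eq_sub (Finset.mem_univ _)]

theorem InTheta.sum_sub_topSym_pos {p0 p1 : A ≃ Fin (m+2)} {τ : A → ℝ}
    (h : InTheta p0 p1 τ) : 0 < ∑ α, τ α - τ (topSym p0) := by
  rw [topSym, ← sum_ite_val_le_eq]
  exact (h m (by omega)).1

theorem InTheta.sum_sub_botSym_neg {p0 p1 : A ≃ Fin (m+2)} {τ : A → ℝ}
    (h : InTheta p0 p1 τ) : ∑ α, τ α - τ (botSym p1) < 0 := by
  rw [botSym, ← sum_ite_val_le_eq]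
  exact (h m (by omega)).2

namespace Step

theorem tau_eq_of_ne {D E : Datum A m} (h : Step D E) {α : A}
    (hα : α ≠ fwWinner D.p0 D.p1 D.lam) : E.tau α = D.tau α := by
  rw [h.1, Function.update_of_ne hα]

theorem sum_tau {D E : Datum A m} (h : Step D E) :
    ∑ α, E.tau α = ∑ α, D.tau α - D.tau (fwLoser D.p0 D.p1 D.lam) := by
  rw [h.1, fwWinner, fwLoser]
  split_ifs <;> exact sum_update_sub _ _ _

/- On `Θ^𝒜(π)` the sign of the total `τ` after a step records its type: the step removes the
loser's `τ`, leaving a partial sum of `τ` over one row. -/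
theorem lam_lt_of_sum_neg {D E : Datum A (m+1)} (h : Step D E)
    (hθ : InTheta D.p0 D.p1 D.tau) (hE : ∑ α, E.tau α < 0) :
    D.lam (botSym D.p1) < D.lam (topSym D.p0) := by
  by_contra hn
  have hsum := h.sum_tau
  rw [fwLoser, if_neg hn] at hsum
  linarith [hθ.sum_sub_topSym_pos]

theorem not_lam_lt_of_sum_nonneg {D E : Datum A (m+1)} (h : Step D E)
    (hθ : InTheta D.p0 D.p1 D.tau) (hE : 0 ≤ ∑ α, E.tau α) :
    ¬ D.lam (botSym D.p1) < D.lam (topSym D.p0) := by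
  intro hlt
  have hsum := h.sum_tau
  rw [fwLoser, if_pos hlt] at hsum
  linarith [hθ.sum_sub_botSym_neg]

theorem backward_of_sum_neg {D E : Datum A (m+1)} (h : Step D E)
    (hθ : InTheta D.p0 D.p1 D.tau) (hE : ∑ α, E.tau α < 0) :
    D.p0 = E.p0 ∧
    (∀ α, (D.p1 α : ℕ) = undoInsertAfter (E.p1 (topSym E.p0)) (m+1) (E.p1 α)) ∧
    (∀ α, α ≠ topSym E.p0 → D.tau α = E.tau α) ∧
    ∑ α, D.tau α = ∑ α, E.tau α + D.tau (botSym D.p1) := by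
  have hlt := h.lam_lt_of_sum_neg hθ hE
  obtain ⟨-, hp0, hp1, -⟩ := h.2.resolve_right fun h' => lt_asymm hlt h'.1
  have hw : fwWinner D.p0 D.p1 D.lam = topSym E.p0 := by rw [fwWinner, if_pos hlt, hp0]
  have hl : fwLoser D.p0 D.p1 D.lam = botSym D.p1 := if_pos hlt
  refine ⟨hp0.symm, fun α => ?_, fun α hα => (h.tau_eq_of_ne (hw ▸ hα)).symm, ?_⟩
  · rw [hp0]
    exact val_eq_undoInsertAfter hp1 α
  · linarith [hl ▸ h.sum_tau]

theorem backward_of_sum_nonneg {D E : Datum A (m+1)} (h : Step D E)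
    (hθ : InTheta D.p0 D.p1 D.tau) (hE : 0 ≤ ∑ α, E.tau α) :
    D.p1 = E.p1 ∧
    (∀ α, (D.p0 α : ℕ) = undoInsertAfter (E.p0 (botSym E.p1)) (m+1) (E.p0 α)) ∧
    (∀ α, α ≠ botSym E.p1 → D.tau α = E.tau α) ∧
    ∑ α, D.tau α = ∑ α, E.tau α + D.tau (topSym D.p0) := by
  have hlt := h.not_lam_lt_of_sum_nonneg hθ hE
  obtain ⟨-, hp1, hp0, -⟩ := h.2.resolve_left fun h' => hlt h'.1
  have hw : fwWinner D.p0 D.p1 D.lam = botSym E.p1 := by rw [fwWinner, if_neg hlt, hp1]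
  have hl : fwLoser D.p0 D.p1 D.lam = topSym D.p0 := if_neg hlt
  refine ⟨hp1.symm, fun α => ?_, fun α hα => (h.tau_eq_of_ne (hw ▸ hα)).symm, ?_⟩
  · rw [hp1]
    exact val_eq_undoInsertAfter hp0 α
  · linarith [hl ▸ h.sum_tau]

/- The same, read through a fixed labelling `p` of positions: `f` lists the positions of the
moving row, `k` is the winner's label and `j` the loser's. -/
theorem backward_of_sum_neg_rel {D E : Datum A (m+1)} (h : Step D E)
    (hθ : InTheta D.p0 D.p1 D.tau) (hE : ∑ α, E.tau α < 0) {p : A ≃ Fin (m+2)} {k : Fin (m+2)}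
    (hw : topSym E.p0 = p.symm k) {f f' : Fin (m+2) → ℕ} (hf : ∀ α, (E.p1 α : ℕ) = f (p α))
    (hf' : ∀ i, undoInsertAfter (f k) (m+1) (f i) = f' i) {j : Fin (m+2)} (hj : f' j = m+1) :
    D.p0 = E.p0 ∧ (∀ α, (D.p1 α : ℕ) = f' (p α)) ∧ (∀ α, α ≠ p.symm k → D.tau α = E.tau α) ∧
    ∑ α, D.tau α = ∑ α, E.tau α + D.tau (p.symm j) := by
  obtain ⟨h0, h1, hτ, hsum⟩ := h.backward_of_sum_neg hθ hE
  have h1' : ∀ α, (D.p1 α : ℕ) = f' (p α) := fun α => by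
    rw [h1, hw, hf, hf, p.apply_symm_apply, hf']
  have hl : botSym D.p1 = p.symm j := by
    rw [botSym, Equiv.symm_apply_eq, Fin.ext_iff, h1', p.apply_symm_apply, hj, Fin.val_last]
  exact ⟨h0, h1', hw ▸ hτ, hl ▸ hsum⟩

theorem backward_of_sum_nonneg_rel {D E : Datum A (m+1)} (h : Step D E)
    (hθ : InTheta D.p0 D.p1 D.tau) (hE : 0 ≤ ∑ α, E.tau α) {p : A ≃ Fin (m+2)} {k : Fin (m+2)}
    (hw : botSym E.p1 = p.symm k) {f f' : Fin (m+2) → ℕ} (hf : ∀ α, (E.p0 α : ℕ) = f (p α))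
    (hf' : ∀ i, undoInsertAfter (f k) (m+1) (f i) = f' i) {j : Fin (m+2)} (hj : f' j = m+1) :
    D.p1 = E.p1 ∧ (∀ α, (D.p0 α : ℕ) = f' (p α)) ∧ (∀ α, α ≠ p.symm k → D.tau α = E.tau α) ∧
    ∑ α, D.tau α = ∑ α, E.tau α + D.tau (p.symm j) := by
  obtain ⟨h1, h0, hτ, hsum⟩ := h.backward_of_sum_nonneg hθ hE
  have h0' : ∀ α, (D.p0 α : ℕ) = f' (p α) := fun α => by
    rw [h0, hw, hf, hf, p.apply_symm_apply, hf']
  have hl : topSym D.p0 = p.symm j := by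
    rw [topSym, Equiv.symm_apply_eq, Fin.ext_iff, h0', p.apply_symm_apply, hj, Fin.val_last]
  exact ⟨h1, h0', hw ▸ hτ, hl ▸ hsum⟩

end Step

def IsCylinderDatum (p : A ≃ Fin 4) (D : Datum A 3) : Prop :=
  D.p0 = p ∧ (∀ α, D.p1 α = (p α).rev) ∧ D.tau (p.symm 1) = -D.tau (p.symm 2) ∧
    0 < D.tau (p.symm 1)

namespace IsCylinderDatum

variable {x : ℕ → Datum A 3} {p : A ≃ Fin 4} {n : ℕ}

theorem top_block (hx : IsBackwardOrbit x) (hD : IsCylinderDatum p (x n))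
    (hneg : ∑ α, (x n).tau α < 0) :
    (∀ k < 3, bwWinner (x (n+k)) = p.symm 3) ∧ IsCylinderDatum p (x (n+3)) := by
  obtain ⟨hp0, hp1, hτ, hpos⟩ := hD
  have h23 : p.symm 2 ≠ p.symm 3 := p.symm.injective.ne (by decide)
  have h13 : p.symm 1 ≠ p.symm 3 := p.symm.injective.ne (by decide)
  have hw0 : topSym (x n).p0 = p.symm 3 := by rw [hp0]; rfl
  have hf0 : ∀ α, ((x n).p1 α : ℕ) = ![3, 2, 1, 0] (p α) := fun α => by
    rw [hp1]; generalize p α = i; fin_cases i <;> rfl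
  obtain ⟨h01, hf1, hτ1, hsum1⟩ := (hx n).1.backward_of_sum_neg_rel (hx (n+1)).2.2.1 hneg hw0 hf0
    (f' := ![2, 1, 3, 0]) (by decide) (j := 2) rfl
  have hw1 : topSym (x (n+1)).p0 = p.symm 3 := by rw [h01, hw0]
  have hneg1 : ∑ α, (x (n+1)).tau α < 0 := by rw [hsum1, hτ1 _ h23]; linarith
  obtain ⟨h12, hf2, hτ2, hsum2⟩ := (hx (n+1)).1.backward_of_sum_neg_rel (hx (n+2)).2.2.1 hneg1 hw1
    hf1 (f' := ![1, 3, 2, 0]) (by decide) (j := 1) rfl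
  have hw2 : topSym (x (n+2)).p0 = p.symm 3 := by rw [h12, hw1]
  have hneg2 : ∑ α, (x (n+2)).tau α < 0 := by
    rw [hsum2, hsum1, hτ2 _ h13, hτ1 _ h13, hτ1 _ h23]; linarith
  obtain ⟨h23', hf3, hτ3, -⟩ := (hx (n+2)).1.backward_of_sum_neg_rel (hx (n+3)).2.2.1 hneg2 hw2
    hf2 (f' := ![3, 2, 1, 0]) (by decide) (j := 0) rfl
  refine ⟨fun k hk => ?_, h23'.trans (h12.trans (h01.trans hp0)), fun α => ?_, ?_, ?_⟩
  · interval_cases k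
    exacts [(if_pos hneg).trans hw0, (if_pos hneg1).trans hw1, (if_pos hneg2).trans hw2]
  · rw [Fin.ext_iff, hf3]; generalize p α = i; fin_cases i <;> rfl
  · rw [hτ3 _ h13, hτ2 _ h13, hτ1 _ h13, hτ3 _ h23, hτ2 _ h23, hτ1 _ h23, hτ]
  · rw [hτ3 _ h13, hτ2 _ h13, hτ1 _ h13]; exact hpos

theorem bot_block (hx : IsBackwardOrbit x) (hD : IsCylinderDatum p (x n))
    (hnonneg : 0 ≤ ∑ α, (x n).tau α) :
    (∀ k < 3, bwWinner (x (n+k)) = p.symm 0) ∧ IsCylinderDatum p (x (n+3)) := by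
  obtain ⟨hp0, hp1, hτ, hpos⟩ := hD
  have h10 : p.symm 1 ≠ p.symm 0 := p.symm.injective.ne (by decide)
  have h20 : p.symm 2 ≠ p.symm 0 := p.symm.injective.ne (by decide)
  have hw0 : botSym (x n).p1 = p.symm 0 := by
    rw [botSym, Equiv.symm_apply_eq, hp1, p.apply_symm_apply]; rfl
  have hf0 : ∀ α, ((x n).p0 α : ℕ) = ![0, 1, 2, 3] (p α) := fun α => by
    rw [hp0]; generalize p α = i; fin_cases i <;> rfl
  obtain ⟨h01, hf1, hτ1, hsum1⟩ := (hx n).1.backward_of_sum_nonneg_rel (hx (n+1)).2.2.1 hnonneg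
    hw0 hf0 (f' := ![0, 3, 1, 2]) (by decide) (j := 1) rfl
  have hw1 : botSym (x (n+1)).p1 = p.symm 0 := by rw [h01, hw0]
  have hnonneg1 : 0 ≤ ∑ α, (x (n+1)).tau α := by rw [hsum1, hτ1 _ h10]; linarith
  obtain ⟨h12, hf2, hτ2, hsum2⟩ := (hx (n+1)).1.backward_of_sum_nonneg_rel (hx (n+2)).2.2.1
    hnonneg1 hw1 hf1 (f' := ![0, 2, 3, 1]) (by decide) (j := 2) rfl
  have hw2 : botSym (x (n+2)).p1 = p.symm 0 := by rw [h12, hw1]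
  have hnonneg2 : 0 ≤ ∑ α, (x (n+2)).tau α := by
    rw [hsum2, hsum1, hτ2 _ h20, hτ1 _ h20, hτ1 _ h10]; linarith
  obtain ⟨h23, hf3, hτ3, -⟩ := (hx (n+2)).1.backward_of_sum_nonneg_rel (hx (n+3)).2.2.1
    hnonneg2 hw2 hf2 (f' := ![0, 1, 2, 3]) (by decide) (j := 3) rfl
  refine ⟨fun k hk => ?_, Equiv.ext fun α => ?_, fun α => ?_, ?_, ?_⟩
  · interval_cases k
    exacts [(if_neg hnonneg.not_gt).trans hw0, (if_neg hnonneg1.not_gt).trans hw1,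
      (if_neg hnonneg2.not_gt).trans hw2]
  · rw [Fin.ext_iff, hf3]; generalize p α = i; fin_cases i <;> rfl
  · rw [h23, h12, h01, hp1]
  · rw [hτ3 _ h10, hτ2 _ h10, hτ1 _ h10, hτ3 _ h20, hτ2 _ h20, hτ1 _ h20, hτ]
  · rw [hτ3 _ h10, hτ2 _ h10, hτ1 _ h10]; exact hpos

theorem block (hx : IsBackwardOrbit x) (hD : IsCylinderDatum p (x n)) :
    (∀ k < 3, bwWinner (x (n+k)) ≠ p.symm 1 ∧ bwWinner (x (n+k)) ≠ p.symm 2) ∧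
      IsCylinderDatum p (x (n+3)) := by
  rcases lt_or_ge (∑ α, (x n).tau α) 0 with hneg | hnonneg
  · obtain ⟨hw, hD'⟩ := hD.top_block hx hneg
    exact ⟨fun k hk => hw k hk ▸ ⟨p.symm.injective.ne (by decide),
      p.symm.injective.ne (by decide)⟩, hD'⟩
  · obtain ⟨hw, hD'⟩ := hD.bot_block hx hnonneg
    exact ⟨fun k hk => hw k hk ▸ ⟨p.symm.injective.ne (by decide),
      p.symm.injective.ne (by decide)⟩, hD'⟩

end IsCylinderDatum

/-- Positions are 0-indexed, so the paper's `π₀⁻¹(2), π₀⁻¹(3)` are `p0.symm 1, p0.symm 2` and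
`i ↦ 5 - i` is `Fin.rev`. -/
theorem cylinder_example_never_wins
    (x : ℕ → Datum A 3) (hx : IsBackwardOrbit x)
    (hperm : ∀ i : Fin 4, (x 0).p1 ((x 0).p0.symm i) = Fin.rev i)
    (htau : (x 0).tau ((x 0).p0.symm 1) = - (x 0).tau ((x 0).p0.symm 2))
    (hpos : 0 < (x 0).tau ((x 0).p0.symm 1)) :
    (∀ n, bwWinner (x n) ≠ (x 0).p0.symm 1 ∧ bwWinner (x n) ≠ (x 0).p0.symm 2) ∧
    (x 3).p0 = (x 0).p0 ∧ (x 3).p1 = (x 0).p1 := by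
  have h0 : IsCylinderDatum (x 0).p0 (x 0) :=
    ⟨rfl, fun α => by simpa using hperm ((x 0).p0 α), htau, hpos⟩
  have hblocks : ∀ k, IsCylinderDatum (x 0).p0 (x (3 * k)) := fun k => by
    induction k with
    | zero => exact h0
    | succ k ih => exact (ih.block hx).2
  refine ⟨fun n => ?_, ?_⟩
  · have h := ((hblocks (n / 3)).block hx).1 (n % 3) (Nat.mod_lt _ (by norm_num))
    rwa [Nat.div_add_mod] at h
  · obtain ⟨hp0, hp1, -⟩ := (h0.block hx).2
    exact ⟨hp0, Equiv.ext fun α => (hp1 α).trans (h0.2.1 α).symm⟩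

end RV
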